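/- arXiv:1410.5347 — 3 statements merged into one kernel-verified Lean document; each statement's English description precedes it below -/
import Mathlib

section
/- Let f, g : ℕ → ℝ₊ satisfy: (i) f(r) ≤ 1/2 for all r ∈ {1,...,10}; (ii) g(r) ≤ 1/4 for all r ∈ ℕ; (iii) f(10r) ≤ f(r)² + g(r) for all r ∈ ℕ. If lim_{r→∞} g(r) = 0, then lim_{n→∞} f(10ⁿ r) = 0 for each r ∈ {1,...,10}. -/
open Filter Topology

/-! The sequence `a n = f (10 ^ n * r)` stays below `1/2`, since `(1/2)² + 1/4 = 1/2`, and so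
`a (n + 1) ≤ a n ^ 2 + g ≤ a n / 2 + g`. A sequence contracted by the factor `1/2` up to an
error `g (10 ^ n * r) → 0` tends to `0`. -/

lemma Real.eventually_lt_of_le_mul_add {a b : ℕ → ℝ} {c : ℝ} (hc0 : 0 ≤ c) (hc1 : c < 1)
    (hb : Tendsto b atTop (𝓝 0)) (hrec : ∀ n, a (n + 1) ≤ c * a n + b n) {ε : ℝ} (hε : 0 < ε) :
    ∀ᶠ n in atTop, a n < ε := by
  obtain ⟨N, hN⟩ := eventually_atTop.1 <|
    hb.eventually (gt_mem_nhds (show 0 < ε / 2 * (1 - c) by nlinarith))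
  have hbound : ∀ k, a (N + k) ≤ c ^ k * a N + ε / 2 := by
    intro k
    induction k with
    | zero => simpa using (half_pos hε).le
    | succ k ih =>
      calc a (N + (k + 1)) ≤ c * a (N + k) + b (N + k) := hrec (N + k)
        _ ≤ c * (c ^ k * a N + ε / 2) + ε / 2 * (1 - c) := by
          gcongr
          exact (hN _ (Nat.le_add_right N k)).le
        _ = c ^ (k + 1) * a N + ε / 2 := by ring
  have hgeom : Tendsto (fun k => c ^ k * a N) atTop (𝓝 0) := by
    simpa using (tendsto_pow_atTop_nhds_zero_of_lt_one hc0 hc1).mul_const (a N)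
  obtain ⟨K, hK⟩ := eventually_atTop.1 <| hgeom.eventually (gt_mem_nhds (half_pos hε))
  refine eventually_atTop.2 ⟨N + K, fun n hn => ?_⟩
  obtain ⟨k, rfl⟩ := Nat.exists_eq_add_of_le (le_of_add_le_left hn)
  linarith [hbound k, hK k (by omega)]

theorem Real.tendsto_zero_of_le_mul_add {a b : ℕ → ℝ} {c : ℝ} (ha : ∀ n, 0 ≤ a n) (hc0 : 0 ≤ c)
    (hc1 : c < 1) (hb : Tendsto b atTop (𝓝 0)) (hrec : ∀ n, a (n + 1) ≤ c * a n + b n) :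
    Tendsto a atTop (𝓝 0) :=
  tendsto_order.2 ⟨fun _ h => Eventually.of_forall fun n => h.trans_le (ha n),
    fun _ => Real.eventually_lt_of_le_mul_add hc0 hc1 hb hrec⟩

lemma le_half_of_le_sq_add {a b : ℕ → ℝ} (ha : ∀ n, 0 ≤ a n) (ha0 : a 0 ≤ 1 / 2)
    (hb : ∀ n, b n ≤ 1 / 4) (hrec : ∀ n, a (n + 1) ≤ a n ^ 2 + b n) (n : ℕ) : a n ≤ 1 / 2 := by
  induction n with
  | zero => exact ha0
  | succ n ih => nlinarith [hrec n, hb n, ha n]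

lemma le_half_mul_add_of_le_sq_add {a b : ℕ → ℝ} (ha : ∀ n, 0 ≤ a n) (ha0 : a 0 ≤ 1 / 2)
    (hb : ∀ n, b n ≤ 1 / 4) (hrec : ∀ n, a (n + 1) ≤ a n ^ 2 + b n) (n : ℕ) :
    a (n + 1) ≤ 1 / 2 * a n + b n := by
  nlinarith [hrec n, ha n, le_half_of_le_sq_add ha ha0 hb hrec n]

theorem stmt9_general (f g : ℕ → ℝ)
    (hf0 : ∀ r, 0 ≤ f r)
    (hf : ∀ r, 1 ≤ r → r ≤ 10 → f r ≤ 1 / 2)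
    (hg : ∀ r, 1 ≤ r → g r ≤ 1 / 4)
    (hrec : ∀ r, 1 ≤ r → f (10 * r) ≤ (f r) ^ 2 + g r)
    (hglim : Tendsto g atTop (nhds 0)) :
    ∀ r, 1 ≤ r → r ≤ 10 →
      Tendsto (fun n : ℕ => f (10 ^ n * r)) atTop (nhds 0) := by
  intro r hr1 hr10
  have hpos : ∀ n : ℕ, 1 ≤ 10 ^ n * r := fun n =>
    hr1.trans (Nat.le_mul_of_pos_left r (by positivity))
  have hstep : ∀ n : ℕ, f (10 ^ (n + 1) * r) ≤ f (10 ^ n * r) ^ 2 + g (10 ^ n * r) := by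
    intro n
    rw [pow_succ', mul_assoc]
    exact hrec _ (hpos n)
  have hscale : Tendsto (fun n : ℕ => 10 ^ n * r) atTop atTop :=
    tendsto_atTop_mono (fun n => Nat.le_mul_of_pos_right _ hr1)
      (tendsto_pow_atTop_atTop_of_one_lt (by norm_num))
  have hhalf := le_half_mul_add_of_le_sq_add (a := fun n => f (10 ^ n * r))
    (b := fun n => g (10 ^ n * r)) (fun n => hf0 _) (by simpa using hf r hr1 hr10)
    (fun n => hg _ (hpos n)) hstep
  exact Real.tendsto_zero_of_le_mul_add (fun n => hf0 _) (by norm_num) (by norm_num)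
    (hglim.comp hscale) hhalf

/-- let `f, g : ℕ → ℝ₊` satisfy (i) `f(r) ≤ 1/2` for `1 ≤ r ≤ 10`,
(ii) `g(r) ≤ 1/4` for all `r ≥ 1`, (iii) `f(10 r) ≤ f(r)² + g(r)` for all `r ≥ 1`.
If `g(r) → 0` as `r → ∞`, then `f(10ⁿ r) → 0` as `n → ∞`, for each `r ∈ {1, …, 10}`. -/
theorem stmt9 (f g : ℕ → ℝ)
    (hf0 : ∀ r, 0 ≤ f r) (hg0 : ∀ r, 0 ≤ g r)
    (hf : ∀ r, 1 ≤ r → r ≤ 10 → f r ≤ 1 / 2)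
    (hg : ∀ r, 1 ≤ r → g r ≤ 1 / 4)
    (hrec : ∀ r, 1 ≤ r → f (10 * r) ≤ (f r) ^ 2 + g r)
    (hglim : Tendsto g atTop (nhds 0)) :
    ∀ r, 1 ≤ r → r ≤ 10 →
      Tendsto (fun n : ℕ => f (10 ^ n * r)) atTop (nhds 0) :=
  stmt9_general f g hf0 hf hg hrec hglim
end

section
/- (Subcriticality of Boolean percolation on doubling graphs) Let Γ be a countably infinite connected doubling graph with Assouad dimension dim_A(Γ), and let (𝒳,ℛ) be a Bernoulli marked point process on Γ with retention parameter p and i.i.d. radii with law ν. If E_ν[R^{dim_A(Γ)}] < ∞, then there exists p₀ > 0 such that for all p ≤ p₀, almost surely every connected component of the random graph 𝒢(𝒳,ℛ) is finite. -/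
/-!
Multiscale renormalisation of crossing probabilities. Let `π r` be the largest probability,
over centres `w`, that open balls of radii `< r` form a chain from `B(w, 30 r)` to the outside
of `B(w, 100 r)` inside `B(w, 102 r)`; then `π 1 = 0`. A crossing at scale `10 r` either uses
an open ball of radius `≥ r` reaching within `1020 r` of `w`, which has probability at most
`p C E[R^d; R ≥ r]` by a union bound and `|B(v, t)| ≤ C (2t)^d`, or contains two crossings at
scale `r` around points of an `r`-net of `B(w, 702 r)` whose `102 r`-balls are disjoint, hence
independent. So `π (10 r) ≤ p C E[R^d; R ≥ r] + C'' (π r)^2`: for small `p` the values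
`π (10^k)` stay below `1 / (2 C'')`, and then they tend to `0`. An infinite cluster of `v`
forces, at every scale `10^k`, a crossing around `v` or a large ball near `v`.
-/

open MeasureTheory ProbabilityTheory ENNReal

/-- Adjacency relation of the random graph `𝒢(𝒳,ℛ)` in configuration `ω`:
`{u,w}` is an edge iff `X_u = 1` and `w ∈ B(u, R_u)`, or `X_w = 1` and `u ∈ B(w, R_w)`. -/
def boolRel {V Ω : Type*} (G : SimpleGraph V) (X : V → Ω → Bool) (R : V → Ω → ℕ)
    (ω : Ω) (u w : V) : Prop :=
  (X u ω = true ∧ G.dist u w ≤ R u ω) ∨ (X w ω = true ∧ G.dist w u ≤ R w ω)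

open Filter Topology

theorem exists_first_ge_of_succ_le_add {f : ℕ → ℕ} {k lo step : ℕ} (h0 : f 0 < lo)
    (hk : lo ≤ f k) (hstep : ∀ i < k, f (i + 1) ≤ f i + step) :
    ∃ j ≤ k, lo ≤ f j ∧ f j < lo + step ∧ ∀ i < j, f i < lo := by
  have hex : ∃ j, lo ≤ f j := ⟨k, hk⟩
  have hjk : Nat.find hex ≤ k := Nat.find_min' hex hk
  refine ⟨Nat.find hex, hjk, Nat.find_spec hex, ?_, fun i hi => not_le.1 (Nat.find_min hex hi)⟩
  obtain ⟨j, hj⟩ : ∃ j, Nat.find hex = j + 1 :=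
    Nat.exists_eq_succ_of_ne_zero fun h => by have := Nat.find_spec hex; rw [h] at this; omega
  have hbefore := Nat.find_min hex (show j < Nat.find hex by omega)
  have := hstep j (by omega)
  rw [hj]
  omega

theorem ProbabilityTheory.iIndepFun.measure_inter_eq_mul_of_forall_eq {Ω ι β : Type*}
    {mΩ : MeasurableSpace Ω} {μ : Measure Ω} [MeasurableSpace β] [Countable β]
    [MeasurableSingletonClass β] {f : ι → Ω → β} (hf : iIndepFun f μ)
    (hmeas : ∀ i, Measurable (f i)) {S T : Finset ι} (hST : Disjoint S T) {A B : Set Ω}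
    (hA : ∀ ω ω', (∀ i ∈ S, f i ω = f i ω') → ω ∈ A → ω' ∈ A)
    (hB : ∀ ω ω', (∀ i ∈ T, f i ω = f i ω') → ω ∈ B → ω' ∈ B) :
    μ (A ∩ B) = μ A * μ B := by
  have hpre : ∀ (U : Finset ι) (C : Set Ω),
      (∀ ω ω', (∀ i ∈ U, f i ω = f i ω') → ω ∈ C → ω' ∈ C) →
      (fun ω (i : U) => f i ω) ⁻¹' ((fun ω (i : U) => f i ω) '' C) = C := by
    intro U C hC
    refine Set.Subset.antisymm ?_ (Set.subset_preimage_image _ _)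
    rintro ω ⟨ω', hω', heq⟩
    exact hC ω' ω (fun i hi => congrFun heq ⟨i, hi⟩) hω'
  have := (hf.indepFun_finset S T hST hmeas).measure_inter_preimage_eq_mul _ _
    (Set.to_countable ((fun ω (i : S) => f i ω) '' A)).measurableSet
    (Set.to_countable ((fun ω (i : T) => f i ω) '' B)).measurableSet
  rwa [hpre S A hA, hpre T B hB] at this

theorem tendsto_setLIntegral_Ici_atTop_zero {ν : Measure ℕ} {f : ℕ → ℝ≥0∞}
    (hf : ∫⁻ m, f m ∂ν ≠ ⊤) :
    Tendsto (fun s => ∫⁻ m in Set.Ici s, f m ∂ν) atTop (𝓝 0) := by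
  simp_rw [← lintegral_indicator measurableSet_Ici]
  have := tendsto_lintegral_of_dominated_convergence (F := fun s => (Set.Ici s).indicator f)
    (f := fun _ => 0) f (fun _ => .of_discrete)
    (fun s => .of_forall fun m => Set.indicator_le_self _ _ m) hf
    (.of_forall fun m => tendsto_const_nhds.congr' <| (eventually_gt_atTop m).mono
      fun s hs => (Set.indicator_of_notMem (not_le.2 hs) f).symm)
  rwa [lintegral_zero] at this

theorem ENNReal.tendsto_zero_of_le_add_mul_sq {a b : ℕ → ℝ≥0∞} {c γ : ℝ≥0∞} (hγ : γ ≠ ⊤)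
    (hcγ : c * γ ≤ 2⁻¹) (ha₀ : a 0 ≤ γ) (hbγ : ∀ k, b k ≤ γ / 2)
    (hb : Tendsto b atTop (𝓝 0)) (ha : ∀ k, a (k + 1) ≤ b k + c * a k ^ 2) :
    Tendsto a atTop (𝓝 0) := by
  have hsq : ∀ k, a k ≤ γ → c * a k ^ 2 ≤ 2⁻¹ * a k := fun k hk =>
    calc c * a k ^ 2 = c * a k * a k := by ring
      _ ≤ c * γ * a k := by gcongr
      _ ≤ 2⁻¹ * a k := by gcongr
  have hbound : ∀ k, a k ≤ γ := by
    intro k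
    induction k with
    | zero => exact ha₀
    | succ k ih =>
      calc a (k + 1) ≤ γ / 2 + 2⁻¹ * γ :=
            (ha k).trans (add_le_add (hbγ k) ((hsq k ih).trans (by gcongr)))
        _ = γ := by rw [← ENNReal.div_eq_inv_mul, ENNReal.add_halves]
  set L := limsup a atTop
  have hL : L ≤ 2⁻¹ * L :=
    calc L = limsup (fun k => a (k + 1)) atTop := (limsup_nat_add a 1).symm
      _ ≤ limsup (b + fun k => 2⁻¹ * a k) atTop :=
          limsup_le_limsup (.of_forall fun k => (ha k).trans (add_le_add le_rfl
            (hsq k (hbound k))))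
      _ = 2⁻¹ * L := by
          rw [ENNReal.limsup_add_of_left_tendsto_zero hb,
            ENNReal.limsup_const_mul_of_ne_top (by simp)]
  have hLtop : L ≠ ⊤ := ne_top_of_le_ne_top hγ <|
    limsup_le_of_le (by isBoundedDefault) (.of_forall hbound)
  have hL0 : L = 0 := by
    by_contra h
    exact (ENNReal.half_lt_self h hLtop).not_ge (by rwa [ENNReal.div_eq_inv_mul])
  exact tendsto_of_le_liminf_of_limsup_le zero_le hL0.le

def AssouadBound {V : Type*} (G : SimpleGraph V) (C' dimA : ℝ) : Prop :=
  ∀ (v : V) (r : ℕ), 1 ≤ r → ∀ ε : ℝ, 0 < ε → ε < 1 →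
    ∀ s : Finset V, (∀ x ∈ s, G.dist v x ≤ r) →
      (∀ x ∈ s, ∀ y ∈ s, x ≠ y → ε * r ≤ (G.dist x y : ℝ)) →
      (s.card : ℝ) ≤ C' * ε ^ (-dimA)

namespace AssouadBound

variable {V : Type*} {G : SimpleGraph V} {C' dimA : ℝ}

theorem card_le_of_forall_dist_le (hA : AssouadBound G C' dimA) (hconn : G.Connected)
    {w : V} {t : ℕ} (ht : 1 ≤ t) {F : Finset V} (hF : ∀ x ∈ F, G.dist w x ≤ t) :
    (F.card : ℝ) ≤ C' * (2 * t) ^ dimA := by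
  have ht' : (1 : ℝ) ≤ t := by exact_mod_cast ht
  have h2t : (0 : ℝ) < 2 * t := by positivity
  -- distinct vertices are `1`-separated, i.e. `(2t)⁻¹ t`-separated
  have hsep : ∀ x ∈ F, ∀ y ∈ F, x ≠ y → (2 * t : ℝ)⁻¹ * t ≤ (G.dist x y : ℝ) := by
    intro x _ y _ hxy
    have h1 : (1 : ℝ) ≤ G.dist x y := by exact_mod_cast hconn.pos_dist_of_ne hxy
    have h2 : (2 * t : ℝ)⁻¹ * t ≤ 1 := by rw [inv_mul_le_iff₀ h2t]; linarith
    linarith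
  calc (F.card : ℝ) ≤ C' * ((2 * t : ℝ)⁻¹) ^ (-dimA) :=
        hA w t ht _ (by positivity) (inv_lt_one_of_one_lt₀ (by linarith)) F hF hsep
    _ = C' * (2 * t) ^ dimA := by rw [Real.inv_rpow h2t.le, Real.rpow_neg h2t.le, inv_inv]

theorem finite_ball (hA : AssouadBound G C' dimA) (hconn : G.Connected) (w : V) (t : ℕ) :
    {u | G.dist w u ≤ t}.Finite := by
  by_contra h
  obtain ⟨F, hFsub, hFcard⟩ :=
    Set.Infinite.exists_subset_card_eq h (⌈C' * (2 * (t + 1 : ℕ) : ℝ) ^ dimA⌉₊ + 1)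
  have hF := hA.card_le_of_forall_dist_le hconn (Nat.le_add_left 1 t) (F := F)
    fun x hx => (hFsub hx).trans (Nat.le_succ t)
  rw [hFcard] at hF
  push_cast at hF
  linarith [Nat.le_ceil (C' * (2 * ((t : ℝ) + 1)) ^ dimA)]

theorem tsum_indicator_ball_le (hA : AssouadBound G C' dimA) (hconn : G.Connected)
    (w : V) {t : ℕ} (ht : 1 ≤ t) :
    ∑' u, {u | G.dist w u ≤ t}.indicator 1 u ≤ ENNReal.ofReal (C' * (2 * t) ^ dimA) := by
  have hfin := hA.finite_ball hconn w t
  simp only [← _root_.tsum_subtype, Pi.one_apply]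
  rw [ENNReal.tsum_set_one, hfin.encard_eq_coe_toFinset_card, ENat.toENNReal_coe,
    ← ENNReal.ofReal_natCast]
  exact ENNReal.ofReal_le_ofReal <| hA.card_le_of_forall_dist_le hconn (w := w) ht (by simp)

theorem exists_net (hA : AssouadBound G C' dimA) (hconn : G.Connected) (w : V) {r t : ℕ}
    (hr : 1 ≤ r) (hrt : r < t) :
    ∃ N : Finset V, (N.card : ℝ) ≤ C' * ((t : ℝ) / r) ^ dimA ∧
      ∀ a, G.dist w a ≤ t → ∃ x ∈ N, G.dist x a < r := by
  classical
  set B := (hA.finite_ball hconn w t).toFinset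
  set separated := B.powerset.filter fun N => ∀ x ∈ N, ∀ y ∈ N, x ≠ y → r ≤ G.dist x y
  obtain ⟨N, hN, hmax⟩ := separated.exists_max_image Finset.card ⟨∅, by simp [separated]⟩
  simp only [separated, Finset.mem_filter, Finset.mem_powerset] at hN hmax
  have hr' : (0 : ℝ) < r := by exact_mod_cast hr
  have ht' : (0 : ℝ) < t := by exact_mod_cast (Nat.zero_lt_one.trans_le hr).trans hrt
  refine ⟨N, ?_, ?_⟩
  · have hε : (r : ℝ) / t < 1 := (div_lt_one ht').2 (by exact_mod_cast hrt)
    calc (N.card : ℝ) ≤ C' * ((r : ℝ) / t) ^ (-dimA) :=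
          hA w t (by omega) _ (by positivity) hε N (fun x hx => by simpa [B] using hN.1 hx)
            fun x hx y hy hxy => by
              rw [div_mul_cancel₀ _ ht'.ne']; exact_mod_cast hN.2 x hx y hy hxy
      _ = C' * ((t : ℝ) / r) ^ dimA := by
          rw [Real.rpow_neg (by positivity), ← Real.inv_rpow (by positivity), inv_div]
  · intro a ha
    by_contra! hfar
    have haN : a ∉ N := fun h => by simpa using (hfar a h).trans_lt' hr
    have hins := hmax (insert a N) ⟨Finset.insert_subset (by simpa [B]) hN.1, by
      simp only [Finset.mem_insert]
      rintro x (rfl | hx) y (rfl | hy) hxy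
      · exact absurd rfl hxy
      · rw [SimpleGraph.dist_comm]; exact hfar y hy
      · exact hfar x hx
      · exact hN.2 x hx y hy hxy⟩
    rw [Finset.card_insert_of_notMem haN] at hins
    omega

end AssouadBound

section Chains

variable {V Ω : Type*} {G : SimpleGraph V} {X : V → Ω → Bool} {R : V → Ω → ℕ} {ω : Ω}

def IsOpenChain (G : SimpleGraph V) (X : V → Ω → Bool) (R : V → Ω → ℕ) (ω : Ω)
    (c : ℕ → V) (k : ℕ) : Prop :=
  (∀ i ≤ k, X (c i) ω = true) ∧
    ∀ i < k, G.dist (c i) (c (i + 1)) ≤ R (c i) ω + R (c (i + 1)) ω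

def crossing (G : SimpleGraph V) (X : V → Ω → Bool) (R : V → Ω → ℕ) (w : V) (r : ℕ) :
    Set Ω :=
  {ω | ∃ k c, IsOpenChain G X R ω c k ∧ (∀ i ≤ k, R (c i) ω < r ∧ G.dist w (c i) ≤ 102 * r) ∧
    G.dist w (c 0) ≤ 30 * r ∧ 100 * r ≤ G.dist w (c k)}

def largeRadiusEvent (G : SimpleGraph V) (X : V → Ω → Bool) (R : V → Ω → ℕ) (v : V)
    (s : ℕ) : Set Ω :=
  {ω | ∃ u, X u ω = true ∧ s ≤ R u ω ∧ G.dist v u ≤ R u ω + 1020 * s}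

namespace IsOpenChain

variable {c : ℕ → V} {k : ℕ}

theorem comp_add (h : IsOpenChain G X R ω c k) {j l : ℕ} (hjl : j + l ≤ k) :
    IsOpenChain G X R ω (fun i => c (j + i)) l :=
  ⟨fun i hi => h.1 _ (by omega), fun i hi => h.2 _ (by omega)⟩

theorem update (h : IsOpenChain G X R ω c k) {z : V} (hz : X z ω = true)
    (hlink : G.dist (c k) z ≤ R (c k) ω + R z ω) :
    IsOpenChain G X R ω (Function.update c (k + 1) z) (k + 1) := by
  refine ⟨fun i hi => ?_, fun i hi => ?_⟩
  · rcases hi.lt_or_eq with hi | rfl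
    · rw [Function.update_of_ne (by omega)]; exact h.1 i (by omega)
    · rwa [Function.update_self]
  · rcases (Nat.lt_succ_iff.1 hi).lt_or_eq with hi | rfl
    · rw [Function.update_of_ne (by omega), Function.update_of_ne (by omega)]; exact h.2 i hi
    · rwa [Function.update_of_ne (by omega), Function.update_self]

theorem dist_succ_le (h : IsOpenChain G X R ω c k) (hconn : G.Connected) (x : V) {i : ℕ}
    (hi : i < k) :
    G.dist x (c (i + 1)) ≤ G.dist x (c i) + (R (c i) ω + R (c (i + 1)) ω) :=
  hconn.dist_triangle.trans (Nat.add_le_add_left (h.2 i hi) _)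

end IsOpenChain

theorem IsOpenChain.mem_crossing {c : ℕ → V} {k : ℕ} (hch : IsOpenChain G X R ω c k)
    (hconn : G.Connected) {x : V} {j l r : ℕ} (hjl : j ≤ l) (hlk : l ≤ k) (hr : 1 ≤ r)
    (hrad : ∀ i, j ≤ i → i ≤ l → R (c i) ω < r) (hstart : G.dist x (c j) ≤ 30 * r)
    (hend : 100 * r ≤ G.dist x (c l)) :
    ω ∈ crossing G X R x r := by
  have hseg := hch.comp_add (j := j) (l := l - j) (by omega)
  have hstep : ∀ i < l - j, G.dist x (c (j + (i + 1))) ≤ G.dist x (c (j + i)) + 2 * r := by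
    intro i hi
    have := hseg.dist_succ_le hconn x hi
    have := hrad (j + i) (by omega) (by omega)
    have := hrad (j + (i + 1)) (by omega) (by omega)
    omega
  obtain ⟨m, hm, hfar, hnear, hbefore⟩ := exists_first_ge_of_succ_le_add
    (f := fun i => G.dist x (c (j + i))) (lo := 100 * r) (by simp; omega)
    (by simpa [Nat.add_sub_cancel' hjl] using hend) hstep
  refine ⟨m, _, hch.comp_add (by omega), fun i hi => ⟨hrad _ (by omega) (by omega), ?_⟩,
    by simpa using hstart, hfar⟩
  rcases hi.lt_or_eq with hi | rfl
  · exact (hbefore i hi).le.trans (by omega)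
  · omega

theorem exists_openChain_snoc (hconn : G.Connected) {v b z : V}
    (hb : b = v ∨ ∃ k c, IsOpenChain G X R ω c k ∧ G.dist v (c 0) ≤ R (c 0) ω ∧
      G.dist (c k) b ≤ R (c k) ω)
    (hz : X z ω = true) (hbz : G.dist b z ≤ R z ω) :
    ∃ k c, IsOpenChain G X R ω c k ∧ G.dist v (c 0) ≤ R (c 0) ω ∧ c k = z := by
  rcases hb with rfl | ⟨k, c, hch, hstart, hend⟩
  · exact ⟨0, fun _ => z, ⟨fun _ _ => hz, fun _ hi => absurd hi (Nat.not_lt_zero _)⟩, hbz, rfl⟩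
  · refine ⟨k + 1, _, hch.update hz ?_, by simpa using hstart, Function.update_self ..⟩
    have := hconn.dist_triangle (u := c k) (v := b) (w := z)
    omega

theorem exists_openChain_of_reflTransGen (hconn : G.Connected) {v u : V}
    (h : Relation.ReflTransGen (boolRel G X R ω) v u) :
    u = v ∨ ∃ k c, IsOpenChain G X R ω c k ∧ G.dist v (c 0) ≤ R (c 0) ω ∧
      G.dist (c k) u ≤ R (c k) ω := by
  induction h with
  | refl => exact Or.inl rfl
  | tail _ hbu ih =>
    right
    rcases hbu with ⟨hXb, hbu⟩ | ⟨hXu, hub⟩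
    · obtain ⟨k, c, hch, hstart, rfl⟩ := exists_openChain_snoc hconn ih hXb (by simp)
      exact ⟨k, c, hch, hstart, hbu⟩
    · obtain ⟨k, c, hch, hstart, rfl⟩ :=
        exists_openChain_snoc hconn ih hXu (by rwa [SimpleGraph.dist_comm])
      exact ⟨k, c, hch, hstart, by simp⟩

end Chains

section Events

variable {V Ω : Type*} {G : SimpleGraph V} {X : V → Ω → Bool} {R : V → Ω → ℕ}

theorem crossing_one_eq_empty (hconn : G.Connected) (w : V) : crossing G X R w 1 = ∅ := by
  refine Set.eq_empty_of_forall_notMem fun ω ⟨k, c, hch, hin, hstart, hend⟩ => ?_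
  -- balls of radius `0` never link distinct vertices
  have hnear : ∀ i ≤ k, G.dist w (c i) ≤ 30 := by
    intro i hi
    induction i with
    | zero => simpa using hstart
    | succ i ih =>
      have := hch.dist_succ_le hconn w hi
      have := (hin i (by omega)).1
      have := (hin (i + 1) hi).1
      have := ih (by omega)
      omega
  have := hnear k le_rfl
  omega

theorem setOf_infinite_cluster_subset {C' dimA : ℝ} (hA : AssouadBound G C' dimA)
    (hconn : G.Connected) (v : V) {s : ℕ} (hs : 1 ≤ s) :
    {ω | {u | Relation.ReflTransGen (boolRel G X R ω) v u}.Infinite} ⊆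
      crossing G X R v s ∪ largeRadiusEvent G X R v s := by
  intro ω hω
  obtain ⟨u, hvu, hfar⟩ := (Set.Infinite.sdiff hω (hA.finite_ball hconn v (101 * s))).nonempty
  simp only [Set.mem_ofPred_eq, not_le] at hvu hfar
  rcases exists_openChain_of_reflTransGen hconn hvu with rfl | ⟨k, c, hch, hstart, hend⟩
  · simp at hfar
  by_cases hbig : ∃ j, j ≤ k ∧ s ≤ R (c j) ω
  · obtain ⟨j, ⟨hjk, hRj⟩, hmin⟩ : ∃ j, (j ≤ k ∧ s ≤ R (c j) ω) ∧
        ∀ i < j, ¬(i ≤ k ∧ s ≤ R (c i) ω) :=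
      ⟨Nat.find hbig, Nat.find_spec hbig, fun i hi => Nat.find_min hbig hi⟩
    have hsmall : ∀ i < j, R (c i) ω < s := fun i hi =>
      not_le.1 fun h => hmin i hi ⟨by omega, h⟩
    by_cases hreach : ∃ i < j, 100 * s ≤ G.dist v (c i)
    · obtain ⟨i, hij, hi⟩ := hreach
      have := hsmall 0 (by omega)
      exact Or.inl <| hch.mem_crossing hconn (Nat.zero_le i) (by omega) hs
        (fun i' _ hi' => hsmall i' (by omega)) (by omega) hi
    · push Not at hreach
      refine Or.inr ⟨c j, hch.1 j hjk, hRj, ?_⟩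
      cases j with
      | zero => omega
      | succ j =>
        have := hch.dist_succ_le hconn v (i := j) (by omega)
        have := hsmall j (by omega)
        have := hreach j (by omega)
        omega
  · push Not at hbig
    have := hbig 0 (Nat.zero_le k)
    have := hbig k le_rfl
    have := hconn.dist_triangle (u := v) (v := c k) (w := u)
    exact Or.inl <| hch.mem_crossing hconn (Nat.zero_le k) le_rfl hs
      (fun i _ hi => hbig i hi) (by omega) (by omega)

/-- Where the constants come from: a crossing at scale `10 r` runs from distance `300 r` to
distance `1000 r` of `w`. Without large balls all its radii are `< r`, so it passes the spheres
of radii `400 r` and `700 r`, and from there its remainder crosses at scale `r` around nearby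
net points `x` and `y`, whose balls of radius `102 r` are disjoint. -/
theorem crossing_mul_ten_subset (hconn : G.Connected) {w : V} {r : ℕ} (hr : 1 ≤ r)
    {N : Finset V} (hN : ∀ a, G.dist w a ≤ 702 * r → ∃ x ∈ N, G.dist x a < r) :
    crossing G X R w (10 * r) ⊆ largeRadiusEvent G X R w r ∪
      ⋃ xy ∈ (N ×ˢ N).filter (fun xy => 204 * r < G.dist xy.1 xy.2),
        crossing G X R xy.1 r ∩ crossing G X R xy.2 r := by
  intro ω hcross
  by_cases hlarge : ω ∈ largeRadiusEvent G X R w r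
  · exact Or.inl hlarge
  obtain ⟨k, c, hch, hin, hstart, hend⟩ := hcross
  have hrad : ∀ i ≤ k, R (c i) ω < r := fun i hi => not_le.1 fun h =>
    hlarge ⟨c i, hch.1 i hi, h, by have := (hin i hi).2; omega⟩
  have hstep : ∀ i < k, G.dist w (c (i + 1)) ≤ G.dist w (c i) + 2 * r := by
    intro i hi
    have := hch.dist_succ_le hconn w hi
    have := hrad i hi.le
    have := hrad (i + 1) hi
    omega
  have hsphere : ∀ lo, 300 * r < lo → lo ≤ 700 * r → ∃ x ∈ N, lo ≤ G.dist w x + r ∧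
      G.dist w x < lo + 3 * r ∧ ω ∈ crossing G X R x r := by
    intro lo hlo hlo'
    obtain ⟨i, hik, hilo, hihi, -⟩ := exists_first_ge_of_succ_le_add
      (f := fun i => G.dist w (c i)) (lo := lo) (by omega) (by omega) hstep
    obtain ⟨x, hxN, hxi⟩ := hN (c i) (by omega)
    have := hconn.dist_triangle (u := w) (v := c i) (w := x)
    have := hconn.dist_triangle (u := w) (v := x) (w := c i)
    have := hconn.dist_triangle (u := w) (v := x) (w := c k)
    rw [SimpleGraph.dist_comm (u := c i)] at *
    exact ⟨x, hxN, by omega, by omega, hch.mem_crossing hconn hik le_rfl hr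
      (fun i' _ hi' => hrad i' hi') (by omega) (by omega)⟩
  obtain ⟨x, hx, hx₁, hx₂, hxω⟩ := hsphere (400 * r) (by omega) (by omega)
  obtain ⟨y, hy, hy₁, hy₂, hyω⟩ := hsphere (700 * r) (by omega) le_rfl
  have := hconn.dist_triangle (u := w) (v := x) (w := y)
  exact Or.inr <| Set.mem_biUnion (x := (x, y))
    (Finset.mem_filter.2 ⟨Finset.mem_product.2 ⟨hx, hy⟩, show 204 * r < G.dist x y by omega⟩)
    ⟨hxω, hyω⟩

theorem mem_crossing_of_forall_dist_le {w : V} {r : ℕ} {ω ω' : Ω}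
    (h : ∀ u, G.dist w u ≤ 102 * r → (X u ω, R u ω) = (X u ω', R u ω'))
    (hω : ω ∈ crossing G X R w r) : ω' ∈ crossing G X R w r := by
  obtain ⟨k, c, ⟨hX, hlink⟩, hin, hstart, hend⟩ := hω
  have heq : ∀ i ≤ k, X (c i) ω = X (c i) ω' ∧ R (c i) ω = R (c i) ω' := fun i hi =>
    Prod.ext_iff.1 (h (c i) (hin i hi).2)
  refine ⟨k, c, ⟨fun i hi => ?_, fun i hi => ?_⟩, fun i hi => ?_, hstart, hend⟩
  · rw [← (heq i hi).1]; exact hX i hi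
  · rw [← (heq i hi.le).2, ← (heq (i + 1) hi).2]; exact hlink i hi
  · rw [← (heq i hi).2]; exact hin i hi

end Events

section Probability

variable {V : Type*} {G : SimpleGraph V} {C' dimA : ℝ}
  {Ω : Type*} [MeasurableSpace Ω] {P : Measure Ω} {X : V → Ω → Bool} {R : V → Ω → ℕ}

theorem measure_crossing_inter_crossing (hA : AssouadBound G C' dimA) (hconn : G.Connected)
    (hind : iIndepFun (fun v ω => (X v ω, R v ω)) P) (hXm : ∀ v, Measurable (X v))
    (hRm : ∀ v, Measurable (R v)) {x y : V} {r : ℕ} (hxy : 204 * r < G.dist x y) :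
    P (crossing G X R x r ∩ crossing G X R y r) =
      P (crossing G X R x r) * P (crossing G X R y r) := by
  refine hind.measure_inter_eq_mul_of_forall_eq (fun v => (hXm v).prodMk (hRm v))
    (S := (hA.finite_ball hconn x (102 * r)).toFinset)
    (T := (hA.finite_ball hconn y (102 * r)).toFinset) ?_
    (fun ω ω' h => mem_crossing_of_forall_dist_le fun u hu => h u (by simpa using hu))
    (fun ω ω' h => mem_crossing_of_forall_dist_le fun u hu => h u (by simpa using hu))
  refine Finset.disjoint_left.2 fun u hux huy => ?_
  simp only [Set.Finite.mem_toFinset, Set.mem_ofPred_eq] at hux huy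
  have := hconn.dist_triangle (u := x) (v := u) (w := y)
  rw [SimpleGraph.dist_comm (u := u)] at this
  omega

theorem tsum_indicator_ball_add_le (hA : AssouadBound G C' dimA) (hconn : G.Connected)
    (hC' : 0 ≤ C') (hdimA : 0 ≤ dimA) (v : V) {s m : ℕ} (hs : 1 ≤ s) (hm : s ≤ m) :
    ∑' u, {u | G.dist v u ≤ m + 1020 * s}.indicator 1 u ≤
      ENNReal.ofReal (C' * 2042 ^ dimA) * (m : ℝ≥0∞) ^ dimA := by
  have hm' : (s : ℝ) ≤ m := by exact_mod_cast hm
  calc ∑' u, {u | G.dist v u ≤ m + 1020 * s}.indicator 1 u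
      ≤ ENNReal.ofReal (C' * (2 * (m + 1020 * s : ℕ)) ^ dimA) :=
        hA.tsum_indicator_ball_le hconn v (by omega)
    _ ≤ ENNReal.ofReal (C' * 2042 ^ dimA * (m : ℝ) ^ dimA) := by
        rw [mul_assoc, ← Real.mul_rpow (by norm_num) (by positivity)]
        refine ENNReal.ofReal_le_ofReal <| mul_le_mul_of_nonneg_left
          (Real.rpow_le_rpow (by positivity) ?_ hdimA) hC'
        push_cast
        linarith
    _ = _ := by
        rw [ENNReal.ofReal_mul (by positivity), ← ENNReal.ofReal_rpow_of_nonneg (by positivity)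
          hdimA, ENNReal.ofReal_natCast]

theorem tsum_measure_largeRadius_le [Countable V] (hA : AssouadBound G C' dimA)
    (hconn : G.Connected) (hC' : 0 ≤ C') (hdimA : 0 ≤ dimA) (ν : Measure ℕ) (v : V) {s : ℕ}
    (hs : 1 ≤ s) :
    ∑' u, ν {m | s ≤ m ∧ G.dist v u ≤ m + 1020 * s} ≤
      ENNReal.ofReal (C' * 2042 ^ dimA) * ∫⁻ m in Set.Ici s, (m : ℝ≥0∞) ^ dimA ∂ν := by
  have hpoint : ∀ m, ∑' u, {m | s ≤ m ∧ G.dist v u ≤ m + 1020 * s}.indicator 1 m ≤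
      (Set.Ici s).indicator (fun m => ENNReal.ofReal (C' * 2042 ^ dimA) * (m : ℝ≥0∞) ^ dimA)
        m := by
    intro m
    by_cases hm : s ≤ m
    · rw [Set.indicator_of_mem (Set.mem_Ici.2 hm)]
      convert tsum_indicator_ball_add_le hA hconn hC' hdimA v hs hm using 2 with u
      simp [Set.indicator_apply, hm]
    · simp [hm]
  calc ∑' u, ν {m | s ≤ m ∧ G.dist v u ≤ m + 1020 * s}
      = ∫⁻ m, ∑' u, {m | s ≤ m ∧ G.dist v u ≤ m + 1020 * s}.indicator 1 m ∂ν := by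
        rw [lintegral_tsum fun _ => Measurable.of_discrete.aemeasurable]
        simp_rw [lintegral_indicator_one (Set.to_countable _).measurableSet]
    _ ≤ _ := lintegral_mono hpoint
    _ = _ := by
        rw [lintegral_indicator measurableSet_Ici, lintegral_const_mul _ .of_discrete]

theorem measure_largeRadiusEvent_le [Countable V] (hA : AssouadBound G C' dimA)
    (hconn : G.Connected) (hC' : 0 ≤ C') (hdimA : 0 ≤ dimA) {ν : Measure ℕ} {p : ℝ}
    (hjoint : ∀ (v : V) (s : Set ℕ), P {ω | X v ω = true ∧ R v ω ∈ s} = ENNReal.ofReal p * ν s)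
    (v : V) {s : ℕ} (hs : 1 ≤ s) :
    P (largeRadiusEvent G X R v s) ≤ ENNReal.ofReal p *
      (ENNReal.ofReal (C' * 2042 ^ dimA) * ∫⁻ m in Set.Ici s, (m : ℝ≥0∞) ^ dimA ∂ν) := by
  calc P (largeRadiusEvent G X R v s)
      ≤ ∑' u, P {ω | X u ω = true ∧ R u ω ∈ {m | s ≤ m ∧ G.dist v u ≤ m + 1020 * s}} := by
        rw [largeRadiusEvent, Set.ofPred_exists]
        exact measure_iUnion_le _
    _ = ENNReal.ofReal p * ∑' u, ν {m | s ≤ m ∧ G.dist v u ≤ m + 1020 * s} := by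
        rw [← ENNReal.tsum_mul_left]; simp_rw [hjoint]
    _ ≤ _ := by gcongr; exact tsum_measure_largeRadius_le hA hconn hC' hdimA ν v hs

theorem measure_crossing_mul_ten_le [Countable V] (hA : AssouadBound G C' dimA)
    (hconn : G.Connected) (hind : iIndepFun (fun v ω => (X v ω, R v ω)) P)
    (hXm : ∀ v, Measurable (X v)) (hRm : ∀ v, Measurable (R v)) (w : V) {r : ℕ} (hr : 1 ≤ r) :
    P (crossing G X R w (10 * r)) ≤ P (largeRadiusEvent G X R w r) +
      ENNReal.ofReal (C' * 702 ^ dimA) ^ 2 * (⨆ x, P (crossing G X R x r)) ^ 2 := by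
  obtain ⟨N, hNcard, hNcov⟩ := hA.exists_net hconn w hr (t := 702 * r) (by omega)
  have hN : (N.card : ℝ≥0∞) ≤ ENNReal.ofReal (C' * 702 ^ dimA) := by
    have hr' : (r : ℝ) ≠ 0 := by positivity
    rw [← ENNReal.ofReal_natCast]
    exact ENNReal.ofReal_le_ofReal (by simpa [mul_div_assoc, div_self hr'] using hNcard)
  set π := ⨆ x, P (crossing G X R x r)
  set pairs := (N ×ˢ N).filter fun xy => 204 * r < G.dist xy.1 xy.2
  have hpair : ∀ xy ∈ pairs, P (crossing G X R xy.1 r ∩ crossing G X R xy.2 r) ≤ π ^ 2 := by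
    intro xy hxy
    rw [measure_crossing_inter_crossing hA hconn hind hXm hRm (Finset.mem_filter.1 hxy).2, sq]
    exact mul_le_mul' (le_iSup (fun x => P (crossing G X R x r)) _)
      (le_iSup (fun x => P (crossing G X R x r)) _)
  calc P (crossing G X R w (10 * r))
      ≤ P (largeRadiusEvent G X R w r) +
          ∑ xy ∈ pairs, P (crossing G X R xy.1 r ∩ crossing G X R xy.2 r) :=
        (measure_mono (crossing_mul_ten_subset hconn hr hNcov)).trans <|
          (measure_union_le _ _).trans <|
          add_le_add_right (measure_biUnion_finset_le _ _) _
    _ ≤ P (largeRadiusEvent G X R w r) + (N.card : ℝ≥0∞) ^ 2 * π ^ 2 := by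
        gcongr
        refine (Finset.sum_le_sum hpair).trans ?_
        rw [Finset.sum_const, nsmul_eq_mul, sq (N.card : ℝ≥0∞), ← Nat.cast_mul,
          ← Finset.card_product]
        gcongr
        exact Finset.filter_subset _ _
    _ ≤ _ := by gcongr

theorem tendsto_iSup_measure_crossing [Countable V] (hA : AssouadBound G C' dimA)
    (hconn : G.Connected) (hC' : 0 < C') (hind : iIndepFun (fun v ω => (X v ω, R v ω)) P)
    (hXm : ∀ v, Measurable (X v)) (hRm : ∀ v, Measurable (R v)) {b : ℕ → ℝ≥0∞}
    (hb : Tendsto b atTop (𝓝 0))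
    (hbγ : ∀ k, b k ≤ 2⁻¹ * (ENNReal.ofReal (C' * 702 ^ dimA) ^ 2)⁻¹ / 2)
    (hlarge : ∀ v k, P (largeRadiusEvent G X R v (10 ^ k)) ≤ b k) :
    Tendsto (fun k => ⨆ x, P (crossing G X R x (10 ^ k))) atTop (𝓝 0) := by
  have hN : ENNReal.ofReal (C' * 702 ^ dimA) ^ 2 ≠ 0 :=
    pow_ne_zero _ (ENNReal.ofReal_pos.2 (by positivity)).ne'
  have hN' : ENNReal.ofReal (C' * 702 ^ dimA) ^ 2 ≠ ⊤ := ENNReal.pow_ne_top ENNReal.ofReal_ne_top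
  refine ENNReal.tendsto_zero_of_le_add_mul_sq (ENNReal.mul_ne_top (by simp)
    (ENNReal.inv_ne_top.2 hN)) (by rw [mul_left_comm, ENNReal.mul_inv_cancel hN hN', mul_one])
    (by simp [crossing_one_eq_empty hconn]) hbγ hb fun k => iSup_le fun w => ?_
  rw [pow_succ']
  exact (measure_crossing_mul_ten_le hA hconn hind hXm hRm w
    (Nat.one_le_pow _ _ (by norm_num))).trans (add_le_add (hlarge w k) le_rfl)

end Probability

theorem stmt11_general {V : Type*} [Countable V]
    (G : SimpleGraph V) (hconn : G.Connected)
    (dimA C' : ℝ) (hC' : 0 < C') (hdimA : 0 < dimA)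
    (hdim : ∀ (v : V) (r : ℕ), 1 ≤ r → ∀ ε : ℝ, 0 < ε → ε < 1 →
      ∀ s : Finset V, (∀ x ∈ s, G.dist v x ≤ r) →
        (∀ x ∈ s, ∀ y ∈ s, x ≠ y → ε * r ≤ (G.dist x y : ℝ)) →
        (s.card : ℝ) ≤ C' * ε ^ (-dimA))
    (ν : Measure ℕ)
    (hmom : ∫⁻ m, (m : ℝ≥0∞) ^ dimA ∂ν < ⊤) :
    ∃ p₀ : ℝ, 0 < p₀ ∧
      ∀ (p : ℝ), 0 < p → p ≤ p₀ →
      ∀ (Ω : Type) (_ : MeasurableSpace Ω) (P : Measure Ω), IsProbabilityMeasure P →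
      ∀ (X : V → Ω → Bool) (R : V → Ω → ℕ),
        (∀ v, Measurable (X v)) → (∀ v, Measurable (R v)) →
        iIndepFun
          (fun v ω => (X v ω, R v ω)) P →
        (∀ v, P {ω | X v ω = true} = ENNReal.ofReal p) →
        (∀ v, Measure.map (R v) P = ν) →
        (∀ (v : V) (s : Set ℕ),
          P {ω | X v ω = true ∧ R v ω ∈ s} = ENNReal.ofReal p * ν s) →
        P {ω | ∃ v : V, {u : V | Relation.ReflTransGen (boolRel G X R ω) v u}.Infinite}
          = 0 := by
  set K := ENNReal.ofReal (C' * 2042 ^ dimA)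
  set γ := 2⁻¹ * (ENNReal.ofReal (C' * 702 ^ dimA) ^ 2)⁻¹
  obtain ⟨p₀, hp₀, hsmall⟩ := ENNReal.exists_nnreal_pos_mul_lt
    (a := K * ∫⁻ m, (m : ℝ≥0∞) ^ dimA ∂ν) (b := γ / 2)
    (ENNReal.mul_ne_top ENNReal.ofReal_ne_top hmom.ne) (by simp [γ])
  refine ⟨p₀, hp₀, fun p _ hp Ω _ P _ X R hXm hRm hind _ _ hjoint => ?_⟩
  have hpow : ∀ k, 1 ≤ 10 ^ k := fun k => Nat.one_le_pow _ _ (by norm_num)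
  set b := fun k : ℕ => ENNReal.ofReal p * (K * ∫⁻ m in Set.Ici (10 ^ k), (m : ℝ≥0∞) ^ dimA ∂ν)
  have hb : Tendsto b atTop (𝓝 0) := by
    simpa [mul_assoc] using ENNReal.Tendsto.const_mul ((tendsto_setLIntegral_Ici_atTop_zero
      hmom.ne).comp (tendsto_pow_atTop_atTop_of_one_lt (by norm_num : 1 < 10)))
      (Or.inr (ENNReal.mul_ne_top ENNReal.ofReal_ne_top ENNReal.ofReal_ne_top))
  have hbγ : ∀ k, b k ≤ γ / 2 := fun k =>
    calc b k ≤ ENNReal.ofReal p₀ * (K * ∫⁻ m, (m : ℝ≥0∞) ^ dimA ∂ν) := by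
          simp only [b]; gcongr; exact Measure.restrict_le_self
      _ ≤ γ / 2 := by rw [ENNReal.ofReal_coe_nnreal]; exact hsmall.le
  have hlarge : ∀ v k, P (largeRadiusEvent G X R v (10 ^ k)) ≤ b k := fun v k =>
    measure_largeRadiusEvent_le hdim hconn hC'.le hdimA.le hjoint v (hpow k)
  have hcross := tendsto_iSup_measure_crossing hdim hconn hC' hind hXm hRm hb hbγ hlarge
  have hle : ∀ v k, P {ω | {u | Relation.ReflTransGen (boolRel G X R ω) v u}.Infinite} ≤
      (⨆ x, P (crossing G X R x (10 ^ k))) + b k := fun v k =>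
    (measure_mono (setOf_infinite_cluster_subset hdim hconn v (hpow k))).trans <|
      (measure_union_le _ _).trans <|
        add_le_add (le_iSup (fun x => P (crossing G X R x _)) v) (hlarge v k)
  rw [Set.ofPred_exists, measure_iUnion_null_iff]
  exact fun v => nonpos_iff_eq_zero.1 <| by simpa using ge_of_tendsto' (hcross.add hb) (hle v)

/-- subcriticality of Boolean percolation on doubling graphs: let `Γ` be
a countably infinite connected doubling graph, i.e. every `(ε r)`-separated subset of a
ball of radius `r` has at most `C' ε^{-dimA}` points, and let `ν` be a law on ℕ with
finite `dimA`-moment.  Then there is `p₀ > 0` such that for every retention parameter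
`p ≤ p₀` and every Bernoulli marked point process (i.i.d. pairs `(X_v, R_v)`, `X_v`
Bernoulli(p), `R_v ~ ν` independent of `X`), almost surely every connected component of
the random graph `𝒢(𝒳,ℛ)` is finite. -/
theorem stmt11 {V : Type*} [Countable V] [Infinite V]
    (G : SimpleGraph V) (hconn : G.Connected)
    (dimA C' : ℝ) (hC' : 0 < C') (hdimA : 0 < dimA)
    (hdim : ∀ (v : V) (r : ℕ), 1 ≤ r → ∀ ε : ℝ, 0 < ε → ε < 1 →
      ∀ s : Finset V, (∀ x ∈ s, G.dist v x ≤ r) →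
        (∀ x ∈ s, ∀ y ∈ s, x ≠ y → ε * r ≤ (G.dist x y : ℝ)) →
        (s.card : ℝ) ≤ C' * ε ^ (-dimA))
    (ν : Measure ℕ) [IsProbabilityMeasure ν]
    (hmom : ∫⁻ m, (m : ℝ≥0∞) ^ dimA ∂ν < ⊤) :
    ∃ p₀ : ℝ, 0 < p₀ ∧
      ∀ (p : ℝ), 0 < p → p ≤ p₀ →
      ∀ (Ω : Type) (_ : MeasurableSpace Ω) (P : Measure Ω), IsProbabilityMeasure P →
      ∀ (X : V → Ω → Bool) (R : V → Ω → ℕ),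
        (∀ v, Measurable (X v)) → (∀ v, Measurable (R v)) →
        iIndepFun
          (fun v ω => (X v ω, R v ω)) P →
        (∀ v, P {ω | X v ω = true} = ENNReal.ofReal p) →
        (∀ v, Measure.map (R v) P = ν) →
        (∀ (v : V) (s : Set ℕ),
          P {ω | X v ω = true ∧ R v ω ∈ s} = ENNReal.ofReal p * ν s) →
        P {ω | ∃ v : V, {u : V | Relation.ReflTransGen (boolRel G X R ω) v u}.Infinite}
          = 0 :=
  stmt11_general G hconn dimA C' hC' hdimA hdim ν hmom
end

section
/- If a family S of isometries of a locally finite connected graph Γ acts separating points (every vertex has an infinite orbit under S), then S separates finite sets: for every finite K ⊆ V there exists g ∈ S with g(K) ∩ K = ∅. -/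
lemma ball_finite {V : Type*} (G : SimpleGraph V) (hconn : G.Connected) [G.LocallyFinite]
    (v : V) (n : ℕ) : {u : V | G.dist v u ≤ n}.Finite := by
  classical
  induction n with
  | zero =>
    apply Set.Finite.subset (Set.finite_singleton v)
    intro u hu
    simp only [Set.mem_setOf_eq, Nat.le_zero] at hu
    exact ((hconn.dist_eq_zero_iff).mp hu).symm
  | succ n ih =>
    apply Set.Finite.subset (ih.union (ih.biUnion (fun w _ => (G.neighborSet w).toFinite)))
    intro u hu
    simp only [Set.mem_setOf_eq] at hu
    rcases Nat.lt_or_ge (G.dist v u) (n+1) with h | h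
    · exact Or.inl (Nat.lt_succ_iff.mp h)
    · have hd : G.dist v u = n + 1 := le_antisymm hu h
      obtain ⟨p, hp⟩ := (hconn v u).exists_walk_length_eq_dist
      rw [hd] at hp
      right
      -- reverse walk from u to v of length n+1
      cases hq : p.reverse with
      | nil =>
        have := congrArg SimpleGraph.Walk.length hq
        simp only [SimpleGraph.Walk.length_reverse, SimpleGraph.Walk.length_nil] at this
        omega
      | cons hadj q =>
        rename_i w
        have hql : q.length = n := by
          have := congrArg SimpleGraph.Walk.length hq
          simp only [SimpleGraph.Walk.length_reverse, SimpleGraph.Walk.length_cons] at this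
          omega
        have hw : G.dist v w ≤ n := by
          rw [G.dist_comm]
          calc G.dist w v ≤ q.length := G.dist_le q
            _ = n := hql
        simp only [Set.mem_iUnion]
        exact ⟨w, hw, hadj.symm⟩
      

/-- if a family `S` of isometries of a connected locally finite graph `Γ`
acts separating points (every vertex has an infinite orbit under `S`), then `S`
separates finite sets: for every finite `K ⊆ V` there is `g ∈ S` with `g(K) ∩ K = ∅`. -/
theorem stmt17 {V : Type*} (G : SimpleGraph V) (hconn : G.Connected) [G.LocallyFinite]
    (S : Set (V ≃ V))
    (hiso : ∀ g ∈ S, ∀ u w : V, G.dist (g u) (g w) = G.dist u w)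
    (hsep : ∀ v : V, {u : V | ∃ g ∈ S, g v = u}.Infinite) :
    ∀ K : Finset V, ∃ g ∈ S, ∀ x ∈ K, g x ∉ K := by
  classical
  intro K
  rcases K.eq_empty_or_nonempty with rfl | ⟨x₀, hx₀⟩
  · obtain ⟨v⟩ := hconn.nonempty
    obtain ⟨u, g, hg, -⟩ := (hsep v).nonempty
    exact ⟨g, hg, by simp⟩
  · set R : ℕ := K.sup (fun x => G.dist x₀ x) with hR
    have hRb : ∀ x ∈ K, G.dist x₀ x ≤ R := fun x hx => Finset.le_sup hx
    -- find g in S with dist x₀ (g x₀) > 2R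
    have hball := ball_finite G hconn x₀ (2 * R)
    obtain ⟨u, hu, hub⟩ := ((hsep x₀).diff hball).nonempty
    obtain ⟨g, hg, hgu⟩ := hu
    refine ⟨g, hg, fun x hx hgx => ?_⟩
    have hfar : 2 * R < G.dist x₀ (g x₀) := by
      rw [hgu]; exact Nat.lt_of_not_le hub
    have : G.dist x₀ (g x₀) ≤ G.dist x₀ (g x) + G.dist (g x) (g x₀) :=
      hconn.dist_triangle
    rw [hiso g hg x x₀] at this
    have h1 : G.dist x₀ (g x) ≤ R := hRb _ hgx
    have h2 : G.dist x x₀ ≤ R := by rw [G.dist_comm]; exact hRb _ hx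
    omega
end
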